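/- For every ρ > 0 and every γ ∈ (0, 1/ρ) with γ ≠ 1/(1+ρ), we have (1+ρ)γρ + log(1−γρ) < ρ − log(1+ρ). -/
import Mathlib


theorem stmt_16 (ρ : ℝ) (hρ : 0 < ρ) (γ : ℝ) (hγ : γ ∈ Set.Ioo 0 (1/ρ))
    (hne : γ ≠ 1/(1+ρ)) :
    (1+ρ)*γ*ρ + Real.log (1-γ*ρ) < ρ - Real.log (1+ρ) := by
  obtain ⟨hγ0, hγ1⟩ := hγ
  have h1ρ : (0:ℝ) < 1+ρ := by linarith
  have hx1 : γ*ρ < 1 := by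
    have := (lt_div_iff₀ hρ).mp hγ1
    linarith
  have hy0 : 0 < (1+ρ)*(1-γ*ρ) := mul_pos h1ρ (by linarith)
  have hyne : (1+ρ)*(1-γ*ρ) ≠ 1 := by
    intro h
    apply hne
    have hρ' : ρ ≠ 0 := ne_of_gt hρ
    have h1ρ' : (1:ℝ)+ρ ≠ 0 := ne_of_gt h1ρ
    field_simp
    nlinarith [h]
  have hlog := Real.log_lt_sub_one_of_pos hy0 hyne
  rw [Real.log_mul (ne_of_gt h1ρ) (by linarith : (1:ℝ)-γ*ρ ≠ 0)] at hlog
  nlinarith [hlog]
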